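/- arXiv:2402.19078 — 2 statements merged into one kernel-verified Lean document; each statement's English description precedes it below -/
import Mathlib

section
/- If all preference coefficients are strictly positive (λ_i > 0 for all i), then any minimizer of the smooth Tchebycheff scalarization is Pareto optimal: there is no x ∈ X with f_i(x) ≤ f_i(x*) for all i and f_j(x) < f_j(x*) for some j. -/
theorem stch_minimizer_pareto_of_pos (n m : ℕ) (X : Set (Fin n → ℝ))
    (f : Fin m → (Fin n → ℝ) → ℝ) (lam : Fin m → ℝ) (hlam : ∀ i, 0 < lam i)
    (z : Fin m → ℝ) (μ : ℝ) (hμ : 0 < μ) (xstar : Fin n → ℝ) (hx : xstar ∈ X)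
    (hmin : ∀ x ∈ X,
      μ * Real.log (∑ i, Real.exp (lam i * (f i xstar - z i) / μ)) ≤
      μ * Real.log (∑ i, Real.exp (lam i * (f i x - z i) / μ))) :
    ¬ ∃ x ∈ X, (∀ i, f i x ≤ f i xstar) ∧ (∃ j, f j x < f j xstar) := by
  rintro ⟨x, hxX, hle, j, hj⟩
  have hsum : (∑ i, Real.exp (lam i * (f i x - z i) / μ)) <
      ∑ i, Real.exp (lam i * (f i xstar - z i) / μ) := by
    apply Finset.sum_lt_sum
    · intro i _
      apply Real.exp_le_exp.mpr
      apply div_le_div_of_nonneg_right _ hμ.le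
      exact mul_le_mul_of_nonneg_left (by linarith [hle i]) (hlam i).le
    · refine ⟨j, Finset.mem_univ j, Real.exp_lt_exp.mpr ?_⟩
      have := mul_lt_mul_of_pos_left (show f j x - z j < f j xstar - z j by linarith) (hlam j)
      exact div_lt_div_of_pos_right this hμ
  have hpos : (0:ℝ) < ∑ i, Real.exp (lam i * (f i x - z i) / μ) := by
    have : 0 < Real.exp (lam j * (f j x - z j) / μ) := Real.exp_pos _
    have hjmem := Finset.mem_univ j
    exact Finset.sum_pos (fun i _ => Real.exp_pos _) ⟨j, hjmem⟩
  have hlog := Real.log_lt_log hpos hsum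
  have := hmin x hxX
  nlinarith [mul_lt_mul_of_pos_left hlog hμ]
end

section
/- If the gradient of the smooth Tchebycheff scalarization vanishes at x̂ and λ_i > 0 for all i, then x̂ is Pareto stationary: there exist α_i ≥ 0 with ∑α_i = 1 and ∑_i α_i ∇f_i(x̂) = 0. -/
/-!
At a point where every objective is differentiable, the gradient of the smooth Tchebycheff
scalarization `μ log ∑ᵢ exp (λᵢ (fᵢ - zᵢ) / μ)` is `∑ᵢ λᵢ σᵢ ∇fᵢ`, where `σ` is the softmax of the
exponents; the factor `μ` cancels against the `1 / μ` inside. All these weights are positive, so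
if the gradient vanishes, dividing by their sum gives a convex combination of the `∇fᵢ` equal to
zero.
-/

open Real

variable {ι F : Type*} [Fintype ι] [NormedAddCommGroup F] [InnerProductSpace ℝ F] [CompleteSpace F]

noncomputable def softmax (v : ι → ℝ) (i : ι) : ℝ :=
  exp (v i) / ∑ j, exp (v j)

theorem softmax_pos [Nonempty ι] (v : ι → ℝ) (i : ι) : 0 < softmax v i :=
  div_pos (exp_pos _) (Finset.sum_pos (fun _ _ => exp_pos _) Finset.univ_nonempty)

noncomputable def smoothTchebycheff (lam z : ι → ℝ) (μ : ℝ) (f : ι → F → ℝ) (y : F) : ℝ :=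
  μ * log (∑ i, exp (lam i * (f i y - z i) / μ))

theorem exists_normalized_weights_of_sum_smul_eq_zero {𝕜 M : Type*} [Field 𝕜] [LinearOrder 𝕜]
    [IsStrictOrderedRing 𝕜] [AddCommGroup M] [Module 𝕜 M] {w : ι → 𝕜} {v : ι → M}
    (hw : ∀ i, 0 ≤ w i) (hsum : 0 < ∑ i, w i) (h : ∑ i, w i • v i = 0) :
    ∃ α : ι → 𝕜, (∀ i, 0 ≤ α i) ∧ ∑ i, α i = 1 ∧ ∑ i, α i • v i = 0 := by
  refine ⟨fun i => w i / ∑ j, w j, fun i => div_nonneg (hw i) hsum.le, ?_, ?_⟩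
  · rw [← Finset.sum_div, div_self hsum.ne']
  · simp only [div_eq_inv_mul, ← smul_smul, ← Finset.smul_sum, h, smul_zero]

theorem HasGradientAt.const_mul {f : F → ℝ} {f' x : F} (h : HasGradientAt f f' x) (c : ℝ) :
    HasGradientAt (fun y => c * f y) (c • f') x := by
  rw [hasGradientAt_iff_hasFDerivAt, map_smul]
  exact h.hasFDerivAt.const_mul c

theorem HasGradientAt.sub_const {f : F → ℝ} {f' x : F} (h : HasGradientAt f f' x) (c : ℝ) :
    HasGradientAt (fun y => f y - c) f' x :=
  HasFDerivAt.sub_const c h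

theorem HasGradientAt.log_sum_exp [Nonempty ι] {u : ι → F → ℝ} {g : ι → F} {x : F}
    (hu : ∀ i, HasGradientAt (u i) (g i) x) :
    HasGradientAt (fun y => log (∑ i, exp (u i y))) (∑ i, softmax (fun j => u j x) i • g i) x := by
  have hS : ∑ i, exp (u i x) ≠ 0 :=
    (Finset.sum_pos (fun i _ => exp_pos _) Finset.univ_nonempty).ne'
  have hsum := (HasFDerivAt.fun_sum fun i _ => (hu i).hasFDerivAt.exp).log hS
  refine hsum.congr_fderiv ?_
  rw [map_sum, Finset.smul_sum]
  refine Finset.sum_congr rfl fun i _ => ?_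
  rw [map_smul, smul_smul, softmax, div_eq_inv_mul]

theorem hasGradientAt_smoothTchebycheff [Nonempty ι] {lam z : ι → ℝ} {μ : ℝ} (hμ : μ ≠ 0)
    {f : ι → F → ℝ} {G : ι → F} {x : F} (hG : ∀ i, HasGradientAt (f i) (G i) x) :
    HasGradientAt (smoothTchebycheff lam z μ f)
      (∑ i, (lam i * softmax (fun j => lam j * (f j x - z j) / μ) i) • G i) x := by
  have hu : ∀ i, HasGradientAt (fun y => lam i * (f i y - z i) / μ) ((lam i / μ) • G i) x :=
    fun i => by simpa only [div_mul_eq_mul_div] using ((hG i).sub_const (z i)).const_mul (lam i / μ)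
  unfold smoothTchebycheff
  convert (HasGradientAt.log_sum_exp hu).const_mul μ using 1
  rw [Finset.smul_sum]
  refine Finset.sum_congr rfl fun i _ => ?_
  rw [smul_smul, smul_smul]
  congr 1
  field_simp

theorem stch_stationary_pareto_stationary (n m : ℕ) (hm : 0 < m)
    (f : Fin m → EuclideanSpace ℝ (Fin n) → ℝ)
    (lam : Fin m → ℝ) (hlam : ∀ i, 0 < lam i) (z : Fin m → ℝ) (μ : ℝ) (hμ : 0 < μ)
    (xhat : EuclideanSpace ℝ (Fin n)) (G : Fin m → EuclideanSpace ℝ (Fin n))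
    (hG : ∀ i, HasGradientAt (f i) (G i) xhat)
    (hstat : HasGradientAt
      (fun y => μ * Real.log (∑ i, Real.exp (lam i * (f i y - z i) / μ))) 0 xhat) :
    ∃ α : Fin m → ℝ, (∀ i, 0 ≤ α i) ∧ (∑ i, α i = 1) ∧ (∑ i, α i • G i = 0) := by
  have : Nonempty (Fin m) := ⟨⟨0, hm⟩⟩
  set w := fun i => lam i * softmax (fun j => lam j * (f j xhat - z j) / μ) i
  have hw : ∀ i, 0 < w i := fun i => mul_pos (hlam i) (softmax_pos _ i)
  have hzero : ∑ i, w i • G i = 0 := (hasGradientAt_smoothTchebycheff hμ.ne' hG).unique hstat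
  exact exists_normalized_weights_of_sum_smul_eq_zero (fun i => (hw i).le)
    (Finset.sum_pos (fun i _ => hw i) Finset.univ_nonempty) hzero
end
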